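/- arXiv:1910.06937 — 4 statements merged into one kernel-verified Lean document; each statement's English description precedes it below -/
import Mathlib

section
/- Let c > 0, lambda in R^{m1}, mu in R^{m2} with mu >= 0, and suppose y is a subgradient at x of the convex function x' |-> L_c(x', lambda, mu). Define lambda+ = lambda + c h(x), mu+ = max{0, mu + c g(x)} (componentwise), u_lambda = (lambda - lambda+)/c and u_mu = (mu - mu+)/c. Then (y, u_lambda, u_mu) belongs to the saddle subdifferential dL(x, lambda+, mu+). -/
open scoped RealInnerProductSpace
open Filter

noncomputable section

/-- `Evec m` is `ℝ^m` with the Euclidean norm. -/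
abbrev Evec (m : ℕ) := EuclideanSpace ℝ (Fin m)

/-- View a plain function `Fin m → ℝ` as a Euclidean vector. -/
def toE {m : ℕ} (v : Fin m → ℝ) : Evec m := WithLp.toLp 2 v

/-- The dual space `ℝ^{m1} × ℝ^{m2}` with the Euclidean (ℓ²) product norm. -/
abbrev DualPair (m1 m2 : ℕ) := WithLp 2 (Evec m1 × Evec m2)

def mkDual {m1 m2 : ℕ} (lam : Evec m1) (mu : Evec m2) : DualPair m1 m2 := WithLp.toLp 2 (lam, mu)

/-- The primal-dual space `X × ℝ^{m1+m2}` with the Euclidean (ℓ²) product norm. -/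
abbrev Triple (X : Type*) [NormedAddCommGroup X] (m1 m2 : ℕ) :=
  WithLp 2 (X × DualPair m1 m2)

def asT {X : Type*} [NormedAddCommGroup X] {m1 m2 : ℕ}
    (q : X × DualPair m1 m2) : Triple X m1 m2 := WithLp.toLp 2 q

variable {X : Type*} [NormedAddCommGroup X] [InnerProductSpace ℝ X] [FiniteDimensional ℝ X]
variable {m1 m2 : ℕ}

/-- The Lagrangian `L(x, λ, μ) = f(x) + ⟨λ, h(x)⟩ + ⟨μ, g(x)⟩`. -/
def Lag (f : X → ℝ) (h : X → Evec m1) (g : X → Evec m2)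
    (x : X) (lam : Evec m1) (mu : Evec m2) : ℝ :=
  f x + ⟪lam, h x⟫ + ⟪mu, g x⟫

/-- `(y, u, v) ∈ ∂L(x, λ, μ)`: the saddle subdifferential of the Lagrangian (for `μ ≥ 0`). -/
def saddleSubdiff (f : X → ℝ) (h : X → Evec m1) (g : X → Evec m2)
    (x : X) (lam : Evec m1) (mu : Evec m2) (y : X) (u : Evec m1) (v : Evec m2) : Prop :=
  (∀ x' : X, Lag f h g x lam mu + ⟪y, x' - x⟫ ≤ Lag f h g x' lam mu) ∧
  (∀ (lam' : Evec m1) (mu' : Evec m2), (∀ i, 0 ≤ mu' i) →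
    Lag f h g x lam' mu' ≤ Lag f h g x lam mu - ⟪u, lam' - lam⟫ - ⟪v, mu' - mu⟫)

/-- The set of saddle points of the Lagrangian: points `(x, (λ, μ))` with `μ ≥ 0`
and `(0,0,0) ∈ ∂L(x, λ, μ)`. -/
def SaddlePoints (f : X → ℝ) (h : X → Evec m1) (g : X → Evec m2) :
    Set (X × DualPair m1 m2) :=
  {s | ∃ (x : X) (lam : Evec m1) (mu : Evec m2), s = (x, mkDual lam mu) ∧
    (∀ i, 0 ≤ mu i) ∧ saddleSubdiff f h g x lam mu 0 0 0}

/-- `X*`: the solution set of the primal problem (P). -/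
def PrimalOpt (f : X → ℝ) (h : X → Evec m1) (g : X → Evec m2) : Set X :=
  {x | h x = 0 ∧ (∀ i, g x i ≤ 0) ∧
    ∀ x' : X, h x' = 0 → (∀ i, g x' i ≤ 0) → f x ≤ f x'}

/-- The dual objective function `d(λ, μ) = inf_x L(x, λ, μ)`, valued in `EReal`. -/
def dualFun (f : X → ℝ) (h : X → Evec m1) (g : X → Evec m2)
    (lam : Evec m1) (mu : Evec m2) : EReal :=
  ⨅ x : X, ((Lag f h g x lam mu : ℝ) : EReal)

/-- `P*`: the solution set of the dual problem (D). -/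
def DualOpt (f : X → ℝ) (h : X → Evec m1) (g : X → Evec m2) : Set (DualPair m1 m2) :=
  {p | ∃ (lam : Evec m1) (mu : Evec m2), p = mkDual lam mu ∧ (∀ i, 0 ≤ mu i) ∧
    ∀ (lam' : Evec m1) (mu' : Evec m2), (∀ i, 0 ≤ mu' i) →
      dualFun f h g lam' mu' ≤ dualFun f h g lam mu}

/-- The augmented Lagrangian with penalty parameter `c`. -/
def AugLag (f : X → ℝ) (h : X → Evec m1) (g : X → Evec m2) (c : ℝ)
    (x : X) (lam : Evec m1) (mu : Evec m2) : ℝ :=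
  f x + ⟪lam, h x⟫ + (c / 2) * ‖h x‖ ^ 2 +
    (1 / (2 * c)) * (‖toE (fun i => max 0 (mu i + c * g x i))‖ ^ 2 - ‖mu‖ ^ 2)

/-- The inexact augmented Lagrangian method of Eckstein and Silva, with relative error
tolerance `σ ∈ [0,1)` and penalty parameters `c k` with `inf_k c k > 0`. -/
structure ALMSeq (f : X → ℝ) (h : X → Evec m1) (g : X → Evec m2)
    (σ : ℝ) (c : ℕ → ℝ) (x y w : ℕ → X)
    (lam : ℕ → Evec m1) (mu : ℕ → Evec m2) : Prop where
  sigma_nonneg : 0 ≤ σ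
  sigma_lt_one : σ < 1
  c_pos : ∀ k, 0 < c k
  c_inf : ∃ cmin > 0, ∀ k, cmin ≤ c k
  mu0_nonneg : ∀ i, 0 ≤ mu 0 i
  /-- `y k` is a subgradient at `x k` of `x ↦ L_{c_k}(x, λ^{k-1}, μ^{k-1})`. -/
  subgrad : ∀ k, 1 ≤ k → ∀ x' : X,
    AugLag f h g (c k) (x k) (lam (k - 1)) (mu (k - 1)) + ⟪y k, x' - x k⟫ ≤
      AugLag f h g (c k) x' (lam (k - 1)) (mu (k - 1))
  /-- The relative error criterion. -/
  err : ∀ k, 1 ≤ k →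
    (2 / c k) * |⟪w (k - 1) - x k, y k⟫| + ‖y k‖ ^ 2 ≤
      σ * (‖h (x k)‖ ^ 2 +
        ‖toE (fun i => min (mu (k - 1) i / c k) (-(g (x k) i)))‖ ^ 2)
  lam_update : ∀ k, 1 ≤ k → lam k = lam (k - 1) + c k • h (x k)
  mu_update : ∀ k, 1 ≤ k → mu k = toE (fun i => max 0 (mu (k - 1) i + c k * g (x k) i))
  w_update : ∀ k, 1 ≤ k → w k = w (k - 1) - c k • y k

/-
Put `λ⁺ = λ + c h(x)`, `μ⁺ = max(0, μ + c g(x))` and `R = L_c(·, λ, μ) - L(·, λ⁺, μ⁺)`.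
Expanding the squares, `R z - R x` equals `(c/2)‖h z - h x‖²` plus `1/(2c)` times a sum of
Bregman divergences of `t ↦ max(0, t)²`, each between `0` and `c² (g_i z - g_i x)²`. Since `h` is
affine and each `g_i`, being convex, is locally Lipschitz, `R` is flat to first order at `x`;
so a subgradient at `x` of `L_c(·, λ, μ) = L(·, λ⁺, μ⁺) + R` is one of the convex function
`L(·, λ⁺, μ⁺)`, which is the primal half. The dual half is linear in `(λ', μ')` and reduces to
the projection inequality `(μ' - μ⁺)·(μ + c g(x) - μ⁺) ≤ 0` for `μ' ≥ 0`.
-/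

open Asymptotics Set Topology

@[simp] lemma toE_apply {m : ℕ} (v : Fin m → ℝ) (i : Fin m) : toE v i = v i := rfl

lemma inner_evec {m : ℕ} (a b : Evec m) : ⟪a, b⟫ = ∑ i, a i * b i := by
  simp [PiLp.inner_apply, mul_comm]

lemma norm_toE_sq {m : ℕ} (v : Fin m → ℝ) : ‖toE v‖ ^ 2 = ∑ i, v i ^ 2 := by
  simp [EuclideanSpace.norm_sq_eq]

def sqPosBregman (s t : ℝ) : ℝ := max 0 t ^ 2 - max 0 s ^ 2 - 2 * max 0 s * (t - s)

lemma sqPosBregman_nonneg (s t : ℝ) : 0 ≤ sqPosBregman s t := by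
  unfold sqPosBregman
  rcases le_total s 0 with hs | hs <;> rcases le_total t 0 with ht | ht <;>
    simp only [max_eq_left, max_eq_right, *] <;> nlinarith [sq_nonneg (t - s)]

lemma sqPosBregman_le_sq (s t : ℝ) : sqPosBregman s t ≤ (t - s) ^ 2 := by
  unfold sqPosBregman
  rcases le_total s 0 with hs | hs <;> rcases le_total t 0 with ht | ht <;>
    simp only [max_eq_left, max_eq_right, *] <;> nlinarith [sq_nonneg (t - s)]

lemma sub_max_zero_mul_sub_max_zero_nonpos {a s : ℝ} (ha : 0 ≤ a) :
    (a - max 0 s) * (s - max 0 s) ≤ 0 := by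
  rcases le_total s 0 with hs | hs
  · rw [max_eq_left hs]; nlinarith
  · rw [max_eq_right hs]; simp

lemma LocallyLipschitz.isBigO_sub {E F : Type*} [SeminormedAddCommGroup E]
    [SeminormedAddCommGroup F] {f : E → F} (hf : LocallyLipschitz f) (x : E) :
    (fun z => f z - f x) =O[𝓝 x] (fun z => z - x) := by
  obtain ⟨K, t, ht, hK⟩ := hf x
  refine IsBigO.of_bound K ?_
  filter_upwards [ht] with z hz
  simpa [dist_eq_norm] using hK.dist_le_mul z hz x (mem_of_mem_nhds ht)

lemma AffineMap.isBigO_sub {E F : Type*} [NormedAddCommGroup E] [NormedSpace ℝ E]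
    [FiniteDimensional ℝ E] [NormedAddCommGroup F] [NormedSpace ℝ F] (A : E →ᵃ[ℝ] F) (x : E) :
    (fun z => A z - A x) =O[𝓝 x] (fun z => z - x) :=
  (LinearMap.toContinuousLinearMap A.linear).isBigO_sub (𝓝 x) x |>.congr_left
    fun z => by simp [← vsub_eq_sub, A.linearMap_vsub]

lemma Asymptotics.IsBigO.norm_sq_isLittleO {E F : Type*} [SeminormedAddCommGroup E]
    [SeminormedAddCommGroup F] {u : E → F} {x : E} (hu : u =O[𝓝 x] (fun z => z - x)) :
    (fun z => ‖u z‖ ^ 2) =o[𝓝 x] (fun z => z - x) := by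
  have hsq : (fun z => ‖z - x‖ ^ 2) =o[𝓝 x] (fun z => z - x) :=
    (isLittleO_norm_pow_id one_lt_two).comp_tendsto (tendsto_sub_nhds_zero_iff.2 tendsto_id)
  exact (hu.norm_norm.pow 2).trans_isLittleO hsq

section Subgradient

variable {E : Type*} [NormedAddCommGroup E] [InnerProductSpace ℝ E]

def IsSubgradient (φ : E → ℝ) (x y : E) : Prop := ∀ z, φ x + ⟪y, z - x⟫ ≤ φ z

lemma ConvexOn.isSubgradient_of_isSubgradient_add {F R : E → ℝ} {x y : E}
    (hF : ConvexOn ℝ univ F) (hR : (fun z => R z - R x) =o[𝓝 x] (fun z => z - x))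
    (hy : IsSubgradient (F + R) x y) : IsSubgradient F x y := by
  intro z
  by_contra! hlt
  set d := z - x
  set a := ⟪y, d⟫ - (F z - F x)
  have ha : 0 < a := by linarith
  set ε := a / (‖d‖ + 1)
  have hεd : ε * ‖d‖ < a := by
    rw [div_mul_eq_mul_div, div_lt_iff₀ (by positivity)]
    nlinarith [norm_nonneg d]
  have hline : Tendsto (fun t : ℝ => x + t • d) (𝓝[>] 0) (𝓝 x) := by
    have : Continuous (fun t : ℝ => x + t • d) := by fun_prop
    simpa using (this.tendsto 0).mono_left nhdsWithin_le_nhds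
  obtain ⟨t, ht_small, ht⟩ :=
    ((hline.eventually (hR.def (by positivity : 0 < ε))).and (Ioo_mem_nhdsGT one_pos)).exists
  have hconv : F (x + t • d) ≤ F x + t * (F z - F x) := by
    have := hF.2 (mem_univ x) (mem_univ z) (sub_nonneg.2 ht.2.le) ht.1.le (by ring)
    simp only [smul_eq_mul] at this
    rw [show x + t • d = (1 - t) • x + t • z by simp only [d, smul_sub, sub_smul, one_smul]; abel]
    linarith
  have hgain : t * a ≤ R (x + t • d) - R x := by
    have := hy (x + t • d)
    simp only [Pi.add_apply, add_sub_cancel_left, real_inner_smul_right] at this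
    linarith
  have hsmall : R (x + t • d) - R x ≤ t * (ε * ‖d‖) := by
    rw [add_sub_cancel_left, norm_smul, Real.norm_of_nonneg ht.1.le] at ht_small
    linarith [le_abs_self (R (x + t • d) - R x), Real.norm_eq_abs (R (x + t • d) - R x)]
  exact (hgain.trans hsmall).not_gt (mul_lt_mul_of_pos_left hεd ht.1)

end Subgradient

section Lagrangian

variable {E : Type*}

lemma convexOn_lag [AddCommGroup E] [Module ℝ E] {f : E → ℝ} (hf : ConvexOn ℝ univ f)
    (A : E →ᵃ[ℝ] Evec m1) {g : E → Evec m2} (hg : ∀ i, ConvexOn ℝ univ fun z => g z i)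
    (lam : Evec m1) {mu : Evec m2} (hmu : ∀ i, 0 ≤ mu i) :
    ConvexOn ℝ univ fun z => Lag f A g z lam mu := by
  have hA : ConvexOn ℝ univ fun z => ⟪lam, A z⟫ :=
    ((innerₛₗ ℝ lam).convexOn convex_univ).comp_affineMap A
  have hgsum : ConvexOn ℝ univ fun z => ⟪mu, g z⟫ := by
    simp_rw [inner_evec]
    convert Finset.sum_induction (s := Finset.univ) (fun i z => mu i * g z i) (ConvexOn ℝ univ)
      (fun _ _ => ConvexOn.add) (convexOn_const 0 convex_univ)
      fun i _ => (hg i).smul (hmu i) using 1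
    ext z
    simp
  exact (hf.add hA).add hgsum

lemma augLag_sub_lag_sub_eq (f : E → ℝ) (h : E → Evec m1) (g : E → Evec m2) {c : ℝ}
    (hc : c ≠ 0) (lam : Evec m1) (mu : Evec m2) (x z : E) :
    (AugLag f h g c z lam mu - Lag f h g z (lam + c • h x) (toE fun i => max 0 (mu i + c * g x i)))
      - (AugLag f h g c x lam mu
        - Lag f h g x (lam + c • h x) (toE fun i => max 0 (mu i + c * g x i))) =
      c / 2 * ‖h z - h x‖ ^ 2 +
        (2 * c)⁻¹ * ∑ i, sqPosBregman (mu i + c * g x i) (mu i + c * g z i) := by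
  have hquad : ∀ w, ⟪lam, w⟫ + c / 2 * ‖w‖ ^ 2 - ⟪lam + c • h x, w⟫ =
      c / 2 * ‖w - h x‖ ^ 2 - c / 2 * ‖h x‖ ^ 2 := by
    intro w
    rw [inner_add_left, real_inner_smul_left, norm_sub_sq_real, real_inner_comm (h x) w]
    ring
  have hbregman : ∑ i, sqPosBregman (mu i + c * g x i) (mu i + c * g z i) =
      ∑ i, max 0 (mu i + c * g z i) ^ 2 - ∑ i, max 0 (mu i + c * g x i) ^ 2
        - 2 * c * (∑ i, max 0 (mu i + c * g x i) * g z i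
          - ∑ i, max 0 (mu i + c * g x i) * g x i) := by
    simp only [mul_sub, Finset.mul_sum, ← Finset.sum_sub_distrib]
    exact Finset.sum_congr rfl fun i _ => by unfold sqPosBregman; ring
  unfold AugLag Lag
  rw [norm_toE_sq, norm_toE_sq, inner_evec _ (g z), inner_evec _ (g x), hbregman, one_div]
  simp only [toE_apply]
  have hx := hquad (h x)
  rw [sub_self, norm_zero] at hx
  linear_combination hquad (h z) - hx + (∑ i, max 0 (mu i + c * g x i) * g z i
    - ∑ i, max 0 (mu i + c * g x i) * g x i) * mul_inv_cancel₀ hc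

lemma isLittleO_augLag_sub_lag [SeminormedAddCommGroup E] (f : E → ℝ) {h : E → Evec m1}
    {g : E → Evec m2} {c : ℝ} (hc : c ≠ 0) (lam : Evec m1) (mu : Evec m2) {x : E}
    (hh : (fun z => h z - h x) =O[𝓝 x] (fun z => z - x))
    (hg : ∀ i, (fun z => g z i - g x i) =O[𝓝 x] (fun z => z - x)) :
    (fun z => (AugLag f h g c z lam mu
        - Lag f h g z (lam + c • h x) (toE fun i => max 0 (mu i + c * g x i)))
      - (AugLag f h g c x lam mu
        - Lag f h g x (lam + c • h x) (toE fun i => max 0 (mu i + c * g x i))))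
      =o[𝓝 x] (fun z => z - x) := by
  simp only [augLag_sub_lag_sub_eq f h g hc]
  have hbregman : ∀ i, (fun z => sqPosBregman (mu i + c * g x i) (mu i + c * g z i))
      =o[𝓝 x] (fun z => z - x) := by
    refine fun i => IsBigO.trans_isLittleO (isBigO_of_le' (c := c ^ 2) (𝓝 x) fun z => ?_)
      (hg i).norm_sq_isLittleO
    have := sqPosBregman_le_sq (mu i + c * g x i) (mu i + c * g z i)
    rw [Real.norm_of_nonneg (sqPosBregman_nonneg _ _), norm_pow, norm_norm, Real.norm_eq_abs,
      sq_abs]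
    linarith
  exact (hh.norm_sq_isLittleO.const_mul_left _).add
    ((IsLittleO.fun_sum fun i _ => hbregman i).const_mul_left _)

lemma lag_le_at_multiplier_update (f : E → ℝ) (h : E → Evec m1) (g : E → Evec m2) {c : ℝ}
    (hc : 0 < c) (lam : Evec m1) (mu : Evec m2) (x : E) (lam' : Evec m1) {mu' : Evec m2}
    (hmu' : ∀ i, 0 ≤ mu' i) :
    Lag f h g x lam' mu' ≤
      Lag f h g x (lam + c • h x) (toE fun i => max 0 (mu i + c * g x i))
        - ⟪c⁻¹ • (lam - (lam + c • h x)), lam' - (lam + c • h x)⟫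
        - ⟪c⁻¹ • (mu - toE fun i => max 0 (mu i + c * g x i)),
            mu' - toE fun i => max 0 (mu i + c * g x i)⟫ := by
  set p : Evec m2 := toE fun i => max 0 (mu i + c * g x i)
  have hlam : c⁻¹ • (lam - (lam + c • h x)) = -h x := by
    rw [sub_add_cancel_left, smul_neg, inv_smul_smul₀ hc.ne']
  have hmu : ⟪mu', g x⟫ - ⟪p, g x⟫ + ⟪c⁻¹ • (mu - p), mu' - p⟫ =
      c⁻¹ * ∑ i, (mu' i - max 0 (mu i + c * g x i)) *
        ((mu i + c * g x i) - max 0 (mu i + c * g x i)) := by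
    rw [← inner_sub_left]
    simp only [inner_evec, Finset.mul_sum, ← Finset.sum_add_distrib]
    refine Finset.sum_congr rfl fun i _ => ?_
    simp only [p, PiLp.sub_apply, PiLp.smul_apply, smul_eq_mul, toE_apply]
    field_simp
    ring
  have hproj : c⁻¹ * ∑ i, (mu' i - max 0 (mu i + c * g x i)) *
      ((mu i + c * g x i) - max 0 (mu i + c * g x i)) ≤ 0 :=
    mul_nonpos_of_nonneg_of_nonpos (inv_nonneg.2 hc.le)
      (Finset.sum_nonpos fun i _ => sub_max_zero_mul_sub_max_zero_nonpos (hmu' i))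
  have hlam' : ⟪h x, lam' - (lam + c • h x)⟫ = ⟪lam', h x⟫ - ⟪lam + c • h x, h x⟫ := by
    rw [inner_sub_right, real_inner_comm (h x), real_inner_comm (h x)]
  unfold Lag
  rw [hlam, inner_neg_left, hlam']
  linarith

end Lagrangian

lemma isSubgradient_lag_of_isSubgradient_augLag {E : Type*} [NormedAddCommGroup E]
    [InnerProductSpace ℝ E] [FiniteDimensional ℝ E] {f : E → ℝ} (hf : ConvexOn ℝ univ f)
    (A : E →ᵃ[ℝ] Evec m1) {g : E → Evec m2} (hg : ∀ i, ConvexOn ℝ univ fun z => g z i)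
    {c : ℝ} (hc : c ≠ 0) {lam : Evec m1} {mu : Evec m2} {x y : E}
    (hy : IsSubgradient (fun z => AugLag f A g c z lam mu) x y) :
    IsSubgradient
      (fun z => Lag f A g z (lam + c • A x) (toE fun i => max 0 (mu i + c * g x i))) x y :=
  (convexOn_lag hf A hg _ fun _ => le_max_left _ _).isSubgradient_of_isSubgradient_add
    (isLittleO_augLag_sub_lag f hc lam mu (A.isBigO_sub x)
      fun i => (hg i).locallyLipschitz.isBigO_sub x)
    (by convert hy; exact add_sub_cancel _ _)

theorem alm_subgradient_step_in_saddle_subdifferential_general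
    {f : X → ℝ} {h : X → Evec m1} {g : X → Evec m2}
    (hf : ConvexOn ℝ Set.univ f)
    (hh : ∃ A : X →ᵃ[ℝ] Evec m1, ∀ z, h z = A z)
    (hg1 : ∀ i, ConvexOn ℝ Set.univ (fun z => g z i))
    (c : ℝ) (hc : 0 < c) (lam : Evec m1) (mu : Evec m2)
    (x yy : X)
    (hy : ∀ x' : X, AugLag f h g c x lam mu + ⟪yy, x' - x⟫ ≤ AugLag f h g c x' lam mu) :
    saddleSubdiff f h g x
      (lam + c • h x) (toE (fun i => max 0 (mu i + c * g x i)))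
      yy
      (c⁻¹ • (lam - (lam + c • h x)))
      (c⁻¹ • (mu - toE (fun i => max 0 (mu i + c * g x i)))) := by
  obtain ⟨A, hA⟩ := hh
  obtain rfl : h = A := funext hA
  exact ⟨isSubgradient_lag_of_isSubgradient_augLag hf A hg1 hc.ne' hy,
    fun lam' _ hmu' => lag_le_at_multiplier_update f A g hc lam mu x lam' hmu'⟩

theorem alm_subgradient_step_in_saddle_subdifferential
    {f : X → ℝ} {h : X → Evec m1} {g : X → Evec m2}
    (hf : ConvexOn ℝ Set.univ f)
    (hh : ∃ A : X →ᵃ[ℝ] Evec m1, ∀ z, h z = A z)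
    (hg1 : ∀ i, ConvexOn ℝ Set.univ (fun z => g z i))
    (hg2 : ∀ i, ContDiff ℝ 1 (fun z => g z i))
    (c : ℝ) (hc : 0 < c) (lam : Evec m1) (mu : Evec m2) (hmu : ∀ i, 0 ≤ mu i)
    (x yy : X)
    (hy : ∀ x' : X, AugLag f h g c x lam mu + ⟪yy, x' - x⟫ ≤ AugLag f h g c x' lam mu) :
    saddleSubdiff f h g x
      (lam + c • h x) (toE (fun i => max 0 (mu i + c * g x i)))
      yy
      (c⁻¹ • (lam - (lam + c • h x)))
      (c⁻¹ • (mu - toE (fun i => max 0 (mu i + c * g x i)))) :=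
  alm_subgradient_step_in_saddle_subdifferential_general hf hh hg1 c hc lam mu x yy hy
end
end

section
/- Let H1 and H2 be real inner product spaces, let c > 0, let p, p', p* in H2, and set u = (p - p')/c. Let x, xbar, y in H1 satisfy <y, x - xbar> + <u, p' - p*> >= 0. Then ||p - p*||^2 - ||p' - p*||^2 >= ||p' - p||^2 - 2 c ||x - xbar|| ||y||. -/
open scoped RealInnerProductSpace

/-- The Fejér-type estimate: if `u = (p - p')/c` and `⟨y, x - x̄⟩ + ⟨u, p' - p*⟩ ≥ 0`, then
`‖p - p*‖² - ‖p' - p*‖² ≥ ‖p' - p‖² - 2c ‖x - x̄‖ ‖y‖`. -/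
theorem fejer_estimate {H1 H2 : Type*}
    [NormedAddCommGroup H1] [InnerProductSpace ℝ H1]
    [NormedAddCommGroup H2] [InnerProductSpace ℝ H2]
    (c : ℝ) (hc : 0 < c) (p p' pstar : H2) (x xbar y : H1)
    (hmono : 0 ≤ ⟪y, x - xbar⟫ + ⟪c⁻¹ • (p - p'), p' - pstar⟫) :
    ‖p - pstar‖ ^ 2 - ‖p' - pstar‖ ^ 2 ≥ ‖p' - p‖ ^ 2 - 2 * c * ‖x - xbar‖ * ‖y‖ := by
  have hid : ‖p - pstar‖ ^ 2 =
      ‖p' - pstar‖ ^ 2 + 2 * ⟪p - p', p' - pstar⟫ + ‖p - p'‖ ^ 2 := by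
    have h : p - pstar = (p' - pstar) + (p - p') := by abel
    rw [h, norm_add_sq_real, real_inner_comm]
  have hsmul : ⟪c⁻¹ • (p - p'), p' - pstar⟫ = c⁻¹ * ⟪p - p', p' - pstar⟫ :=
    real_inner_smul_left _ _ _
  have hcs : ⟪y, x - xbar⟫ ≤ ‖x - xbar‖ * ‖y‖ := by
    calc ⟪y, x - xbar⟫ ≤ ‖y‖ * ‖x - xbar‖ := real_inner_le_norm _ _
    _ = ‖x - xbar‖ * ‖y‖ := mul_comm _ _
  have h1 : -(c * ⟪y, x - xbar⟫) ≤ ⟪p - p', p' - pstar⟫ := by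
    have := mul_le_mul_of_nonneg_left hmono hc.le
    rw [mul_add, hsmul] at this
    have hcc : c * (c⁻¹ * ⟪p - p', p' - pstar⟫) = ⟪p - p', p' - pstar⟫ := by
      field_simp
    linarith [this, hcc ▸ this]
  have hnorm : ‖p - p'‖ = ‖p' - p‖ := norm_sub_rev _ _
  have h2 : c * ⟪y, x - xbar⟫ ≤ c * (‖x - xbar‖ * ‖y‖) :=
    mul_le_mul_of_nonneg_left hcs hc.le
  rw [hid, hnorm]
  nlinarith [h1, h2]
end

section
/- Let H1 and H2 be real inner product spaces, let kappa > 0, sigma in [0,1), c > 0, let p, p', p* in H2, set u = (p - p')/c, and let x, xbar, y in H1. Assume: (i) <y, x - xbar> + <u, p' - p*> >= 0; (ii) ||x - xbar|| <= kappa ||y|| + (kappa / c) ||p - p'||; (iii) ||y|| <= (sqrt(sigma) / c) ||p - p'||. Then ||p - p*||^2 - ||p' - p*||^2 >= (1 - 2 kappa (sigma + sqrt(sigma)) / c) ||p - p'||^2. -/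
open scoped RealInnerProductSpace

/-- One-step Fejér decrease: under the monotonicity inequality, the error bound estimate and
the relative error criterion, `‖p - p*‖² - ‖p' - p*‖² ≥ (1 - 2κ(σ + √σ)/c) ‖p - p'‖²`. -/
theorem fejer_one_step_decrease {H1 H2 : Type*}
    [NormedAddCommGroup H1] [InnerProductSpace ℝ H1]
    [NormedAddCommGroup H2] [InnerProductSpace ℝ H2]
    (κ σ c : ℝ) (hκ : 0 < κ) (hσ0 : 0 ≤ σ) (hσ1 : σ < 1) (hc : 0 < c)
    (p p' pstar : H2) (x xbar y : H1)
    (hmono : 0 ≤ ⟪y, x - xbar⟫ + ⟪c⁻¹ • (p - p'), p' - pstar⟫)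
    (heb : ‖x - xbar‖ ≤ κ * ‖y‖ + κ / c * ‖p - p'‖)
    (herr : ‖y‖ ≤ Real.sqrt σ / c * ‖p - p'‖) :
    ‖p - pstar‖ ^ 2 - ‖p' - pstar‖ ^ 2 ≥
      (1 - 2 * κ * (σ + Real.sqrt σ) / c) * ‖p - p'‖ ^ 2 := by
  have hsm : ⟪c⁻¹ • (p - p'), p' - pstar⟫ = c⁻¹ * ⟪p - p', p' - pstar⟫ :=
    real_inner_smul_left _ _ _
  have hexp : ‖p - pstar‖ ^ 2 =
      ‖p - p'‖ ^ 2 + 2 * ⟪p - p', p' - pstar⟫ + ‖p' - pstar‖ ^ 2 := by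
    have h : p - pstar = (p - p') + (p' - pstar) := by abel
    rw [h, @norm_add_sq_real]
  have hcs : ⟪y, x - xbar⟫ ≤ ‖y‖ * ‖x - xbar‖ := real_inner_le_norm _ _
  have hsq : Real.sqrt σ ^ 2 = σ := Real.sq_sqrt hσ0
  have hy0 : (0:ℝ) ≤ ‖y‖ := norm_nonneg _
  have ha0 : (0:ℝ) ≤ ‖p - p'‖ := norm_nonneg _
  have hx0 : (0:ℝ) ≤ ‖x - xbar‖ := norm_nonneg _
  have hs0 : (0:ℝ) ≤ Real.sqrt σ := Real.sqrt_nonneg _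
  -- bound the inner product
  have hmono' : 0 ≤ ⟪y, x - xbar⟫ + c⁻¹ * ⟪p - p', p' - pstar⟫ := by
    rwa [hsm] at hmono
  have h1 : ⟪p - p', p' - pstar⟫ ≥ -(c * (‖y‖ * ‖x - xbar‖)) := by
    have hA : 0 ≤ c * (⟪y, x - xbar⟫ + c⁻¹ * ⟪p - p', p' - pstar⟫) :=
      mul_nonneg hc.le hmono'
    have hB : c * (c⁻¹ * ⟪p - p', p' - pstar⟫) = ⟪p - p', p' - pstar⟫ := by
      field_simp
    have hC : c * ⟪y, x - xbar⟫ ≤ c * (‖y‖ * ‖x - xbar‖) :=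
      mul_le_mul_of_nonneg_left hcs hc.le
    rw [mul_add, hB] at hA
    linarith
  have h2 : ‖y‖ * ‖x - xbar‖ ≤ κ * (σ + Real.sqrt σ) / c / c * ‖p - p'‖ ^ 2 := by
    have e1 : ‖y‖ * ‖x - xbar‖ ≤ (Real.sqrt σ / c * ‖p - p'‖) *
        (κ * (Real.sqrt σ / c * ‖p - p'‖) + κ / c * ‖p - p'‖) := by
      have hb : ‖x - xbar‖ ≤ κ * (Real.sqrt σ / c * ‖p - p'‖) + κ / c * ‖p - p'‖ := by
        nlinarith
      exact mul_le_mul herr hb hx0 (by positivity)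
    have e2 : (Real.sqrt σ / c * ‖p - p'‖) *
        (κ * (Real.sqrt σ / c * ‖p - p'‖) + κ / c * ‖p - p'‖)
        = κ * (σ + Real.sqrt σ) / c / c * ‖p - p'‖ ^ 2 := by
      field_simp
      ring_nf
      rw [hsq]; ring
    linarith [e2.le, e2.ge]
  have hc' : c ≠ 0 := ne_of_gt hc
  rw [hexp]
  have key : 2 * ⟪p - p', p' - pstar⟫ ≥ -(2 * κ * (σ + Real.sqrt σ) / c * ‖p - p'‖ ^ 2) := by
    have hD := mul_le_mul_of_nonneg_left h2 (le_of_lt hc)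
    have hE : c * (κ * (σ + Real.sqrt σ) / c / c * ‖p - p'‖ ^ 2)
        = κ * (σ + Real.sqrt σ) / c * ‖p - p'‖ ^ 2 := by field_simp
    have hF : 2 * κ * (σ + Real.sqrt σ) / c * ‖p - p'‖ ^ 2
        = 2 * (κ * (σ + Real.sqrt σ) / c * ‖p - p'‖ ^ 2) := by ring
    rw [hE] at hD
    linarith
  nlinarith [key]
end

section
/- Let H2 be a real inner product space, let P* be a nonempty closed convex subset of H2, let kappa > 0, sigma in [0,1), and let c > 0 satisfy c^2 - 2 kappa (sigma + sqrt(sigma)) c > 0. Let p, p' in H2 and assume: (i) ||p - p*||^2 - ||p' - p*||^2 >= (1 - 2 kappa (sigma + sqrt(sigma)) / c) ||p - p'||^2 for every p* in P*; (ii) dist(p', P*) <= (kappa sqrt(1 + sigma) / c) ||p - p'||. Then dist(p', P*) <= rho * dist(p, P*), where rho = kappa sqrt(1 + sigma) / sqrt(c^2 - 2 kappa (sigma + sqrt(sigma)) c + kappa^2 (1 + sigma)). -/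
open scoped RealInnerProductSpace

/-- The one-step Q-linear contraction of the distance to the dual solution set. -/
theorem dual_distance_contraction {H2 : Type*}
    [NormedAddCommGroup H2] [InnerProductSpace ℝ H2]
    (Pstar : Set H2) (hne : Pstar.Nonempty) (hcl : IsClosed Pstar) (hcv : Convex ℝ Pstar)
    (κ σ c : ℝ) (hκ : 0 < κ) (hσ0 : 0 ≤ σ) (hσ1 : σ < 1) (hc : 0 < c)
    (hc2 : 0 < c ^ 2 - 2 * κ * (σ + Real.sqrt σ) * c)
    (p p' : H2)
    (h1 : ∀ pstar ∈ Pstar,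
      ‖p - pstar‖ ^ 2 - ‖p' - pstar‖ ^ 2 ≥
        (1 - 2 * κ * (σ + Real.sqrt σ) / c) * ‖p - p'‖ ^ 2)
    (h2 : Metric.infDist p' Pstar ≤ κ * Real.sqrt (1 + σ) / c * ‖p - p'‖) :
    Metric.infDist p' Pstar ≤
      (κ * Real.sqrt (1 + σ) /
        Real.sqrt (c ^ 2 - 2 * κ * (σ + Real.sqrt σ) * c + κ ^ 2 * (1 + σ))) *
      Metric.infDist p Pstar := by
  set D := Metric.infDist p Pstar with hDdef
  set D' := Metric.infDist p' Pstar with hD'def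
  set d := ‖p - p'‖ with hddef
  have hD0 : 0 ≤ D := Metric.infDist_nonneg
  have hD'0 : 0 ≤ D' := Metric.infDist_nonneg
  have hd0 : 0 ≤ d := norm_nonneg _
  have hsσ : 0 ≤ Real.sqrt σ := Real.sqrt_nonneg _
  have h1σ : (0:ℝ) < 1 + σ := by linarith
  have hs1σ : Real.sqrt (1 + σ) ^ 2 = 1 + σ := Real.sq_sqrt (le_of_lt h1σ)
  have hs1σ0 : 0 < Real.sqrt (1 + σ) := Real.sqrt_pos.2 h1σ
  have hE : 0 < c ^ 2 - 2 * κ * (σ + Real.sqrt σ) * c + κ ^ 2 * (1 + σ) := by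
    nlinarith [sq_nonneg κ]
  set a := 1 - 2 * κ * (σ + Real.sqrt σ) / c with hadef
  have ha : 0 < a := by
    have h' : 2 * κ * (σ + Real.sqrt σ) / c < 1 := by
      rw [div_lt_one hc]; nlinarith
    simp only [hadef]; linarith
  -- step 1 : D'^2 + a * d^2 ≤ D^2
  have key : D' ^ 2 + a * d ^ 2 ≤ D ^ 2 := by
    have hnn : 0 ≤ D' ^ 2 + a * d ^ 2 := by positivity
    have hb : ∀ q ∈ Pstar, Real.sqrt (D' ^ 2 + a * d ^ 2) ≤ dist p q := by
      intro q hq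
      have h1' := h1 q hq
      have hD'q : D' ≤ ‖p' - q‖ := by
        have := Metric.infDist_le_dist_of_mem (x := p') hq
        rwa [dist_eq_norm] at this
      have hsq : D' ^ 2 ≤ ‖p' - q‖ ^ 2 := by nlinarith
      have hle : D' ^ 2 + a * d ^ 2 ≤ ‖p - q‖ ^ 2 := by nlinarith
      rw [dist_eq_norm]
      calc Real.sqrt (D' ^ 2 + a * d ^ 2) ≤ Real.sqrt (‖p - q‖ ^ 2) :=
            Real.sqrt_le_sqrt hle
        _ = ‖p - q‖ := Real.sqrt_sq (norm_nonneg _)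
    have hD : Real.sqrt (D' ^ 2 + a * d ^ 2) ≤ D := by
      by_contra hlt
      push_neg at hlt
      obtain ⟨y, hy, hdy⟩ := (Metric.infDist_lt_iff hne).1 hlt
      exact absurd (hb y hy) (not_le.2 hdy)
    calc D' ^ 2 + a * d ^ 2 = Real.sqrt (D' ^ 2 + a * d ^ 2) ^ 2 :=
          (Real.sq_sqrt hnn).symm
      _ ≤ D ^ 2 := by nlinarith [Real.sqrt_nonneg (D' ^ 2 + a * d ^ 2)]
  -- step 2 : c^2 * D'^2 ≤ κ^2 (1+σ) * d^2
  have hb2 : c ^ 2 * D' ^ 2 ≤ κ ^ 2 * (1 + σ) * d ^ 2 := by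
    have h2' : D' * c ≤ κ * Real.sqrt (1 + σ) * d := by
      have := mul_le_mul_of_nonneg_right h2 (le_of_lt hc)
      calc D' * c ≤ κ * Real.sqrt (1 + σ) / c * d * c := this
        _ = κ * Real.sqrt (1 + σ) * d * (c / c) := by ring
        _ = κ * Real.sqrt (1 + σ) * d := by rw [div_self (ne_of_gt hc), mul_one]
    have hq := pow_le_pow_left₀ (by positivity) h2' 2
    calc c ^ 2 * D' ^ 2 = (D' * c) ^ 2 := by ring
      _ ≤ (κ * Real.sqrt (1 + σ) * d) ^ 2 := hq
      _ = κ ^ 2 * (1 + σ) * d ^ 2 := by rw [mul_pow, mul_pow, hs1σ]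
  set E := c ^ 2 - 2 * κ * (σ + Real.sqrt σ) * c + κ ^ 2 * (1 + σ) with hEdef
  -- combine : E * D'^2 ≤ κ^2 (1+σ) * D^2
  have hcomb : E * D' ^ 2 ≤ κ ^ 2 * (1 + σ) * D ^ 2 := by
    have hc2' : 0 < c ^ 2 := by positivity
    have h1' : κ ^ 2 * (1 + σ) * (D' ^ 2 + a * d ^ 2) ≤ κ ^ 2 * (1 + σ) * D ^ 2 :=
      mul_le_mul_of_nonneg_left key (by positivity)
    have h2' : (c ^ 2 - 2 * κ * (σ + Real.sqrt σ) * c) * D' ^ 2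
        ≤ κ ^ 2 * (1 + σ) * (a * d ^ 2) := by
      have haE : a * c ^ 2 = c ^ 2 - 2 * κ * (σ + Real.sqrt σ) * c := by
        rw [hadef, sub_mul, one_mul, div_mul_eq_mul_div, mul_div_assoc,
          sq, mul_div_assoc, div_self (ne_of_gt hc), mul_one]
      have hmul := mul_le_mul_of_nonneg_left hb2 (le_of_lt ha)
      calc (c ^ 2 - 2 * κ * (σ + Real.sqrt σ) * c) * D' ^ 2
          = a * (c ^ 2 * D' ^ 2) := by rw [← haE]; ring
        _ ≤ a * (κ ^ 2 * (1 + σ) * d ^ 2) := hmul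
        _ = κ ^ 2 * (1 + σ) * (a * d ^ 2) := by ring
    have hEsplit : E * D' ^ 2 = (c ^ 2 - 2 * κ * (σ + Real.sqrt σ) * c) * D' ^ 2
        + κ ^ 2 * (1 + σ) * D' ^ 2 := by rw [hEdef]; ring
    calc E * D' ^ 2
        = (c ^ 2 - 2 * κ * (σ + Real.sqrt σ) * c) * D' ^ 2
          + κ ^ 2 * (1 + σ) * D' ^ 2 := hEsplit
      _ ≤ κ ^ 2 * (1 + σ) * (a * d ^ 2) + κ ^ 2 * (1 + σ) * D' ^ 2 := by linarith
      _ = κ ^ 2 * (1 + σ) * (D' ^ 2 + a * d ^ 2) := by ring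
      _ ≤ κ ^ 2 * (1 + σ) * D ^ 2 := h1'
  -- finish
  have hsE : Real.sqrt E ^ 2 = E := Real.sq_sqrt (le_of_lt hE)
  have hsE0 : 0 < Real.sqrt E := Real.sqrt_pos.2 hE
  have hρ : 0 ≤ κ * Real.sqrt (1 + σ) / Real.sqrt E * D := by positivity
  have hsq : D' ^ 2 ≤ (κ * Real.sqrt (1 + σ) / Real.sqrt E * D) ^ 2 := by
    have heq : (κ * Real.sqrt (1 + σ) / Real.sqrt E * D) ^ 2
        = κ ^ 2 * (1 + σ) * D ^ 2 / E := by
      rw [mul_pow, div_pow, mul_pow, hs1σ, hsE]; ring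
    rw [heq, le_div_iff₀ hE]
    linarith
  calc D' = Real.sqrt (D' ^ 2) := (Real.sqrt_sq hD'0).symm
    _ ≤ Real.sqrt ((κ * Real.sqrt (1 + σ) / Real.sqrt E * D) ^ 2) := Real.sqrt_le_sqrt hsq
    _ = κ * Real.sqrt (1 + σ) / Real.sqrt E * D := Real.sqrt_sq hρ
end
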